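/- The pair {E1, E2} forms a valid two-outcome measurement in the SEP theory on two qubits: E1 + E2 = I₄, and both E1 and E2 yield nonnegative trace against every product state ρ_n ⊗ ρ_m of two qubits. -/

import Mathlib

open Matrix Kronecker ComplexOrder

noncomputable section

def σx : Matrix (Fin 2) (Fin 2) ℂ := !![0, 1; 1, 0]
def σy : Matrix (Fin 2) (Fin 2) ℂ := !![0, -Complex.I; Complex.I, 0]
def σz : Matrix (Fin 2) (Fin 2) ℂ := !![1, 0; 0, -1]

def bloch (n : EuclideanSpace ℝ (Fin 3)) : Matrix (Fin 2) (Fin 2) ℂ :=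
  (1 / 2 : ℂ) • (1 + (n 0 : ℂ) • σx + (n 1 : ℂ) • σy + (n 2 : ℂ) • σz)

def kron2 (A B : Matrix (Fin 2) (Fin 2) ℂ) : Matrix (Fin 4) (Fin 4) ℂ :=
  Matrix.reindex finProdFinEquiv finProdFinEquiv (A ⊗ₖ B)

def E1 : Matrix (Fin 4) (Fin 4) ℂ :=
  !![0, 0, 0, 1/2;
     0, 1, 1/2, 0;
     0, 1/2, 1, 0;
     1/2, 0, 0, 0]

def E2 : Matrix (Fin 4) (Fin 4) ℂ := 1 - E1

/-!
A direct computation gives `Tr(E1 (ρ_n ⊗ ρ_m)) = (1 + n₀ m₀ - n₂ m₂) / 2`, and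
`Tr(ρ_n ⊗ ρ_m) = 1`, so
`Tr(E2 (ρ_n ⊗ ρ_m)) = (1 - (n₀ m₀ - n₂ m₂)) / 2`. Both are nonnegative because
`(n₀ m₀ - n₂ m₂)² ≤ (n₀² + n₂²)(m₀² + m₂²) ≤ ‖n‖² ‖m‖² ≤ 1` by the Brahmagupta–Fibonacci identity.
-/

theorem Matrix.trace_reindex {R m n : Type*} [Fintype m] [Fintype n] [AddCommMonoid R]
    (e : m ≃ n) (A : Matrix m m R) : (reindex e e A).trace = A.trace := by
  simp only [trace, diag, reindex_apply, submatrix_apply]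
  exact e.symm.sum_comp fun i => A i i

theorem trace_kron2 (A B : Matrix (Fin 2) (Fin 2) ℂ) :
    (kron2 A B).trace = A.trace * B.trace := by
  rw [kron2, trace_reindex, trace_kronecker]

theorem bloch_eq_of (n : EuclideanSpace ℝ (Fin 3)) :
    bloch n = !![(1 + (n 2 : ℂ)) / 2, ((n 0 : ℂ) - (n 1 : ℂ) * Complex.I) / 2;
                 ((n 0 : ℂ) + (n 1 : ℂ) * Complex.I) / 2, (1 - (n 2 : ℂ)) / 2] := by
  ext i j
  fin_cases i <;> fin_cases j <;> simp [bloch, σx, σy, σz] <;> ring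

theorem trace_bloch (n : EuclideanSpace ℝ (Fin 3)) : (bloch n).trace = 1 := by
  rw [bloch_eq_of, trace_fin_two_of]
  ring

theorem trace_E1_mul (M : Matrix (Fin 4) (Fin 4) ℂ) :
    (E1 * M).trace = M 1 1 + M 2 2 + (M 0 3 + M 3 0 + M 1 2 + M 2 1) / 2 := by
  simp only [trace, E1, one_div, cons_mul, Nat.succ_eq_add_one, Nat.reduceAdd, empty_mul,
    Equiv.symm_apply_apply, diag_apply, of_apply, cons_val', vecMul, dotProduct, Fin.sum_univ_four,
    Fin.isValue, cons_val_zero, zero_mul, cons_val_one, add_zero, cons_val, zero_add, one_mul,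
    cons_val_fin_one]
  ring

theorem trace_E1_mul_kron2 (A B : Matrix (Fin 2) (Fin 2) ℂ) :
    (E1 * kron2 A B).trace = A 0 0 * B 1 1 + A 1 1 * B 0 0 +
      (A 0 1 * B 0 1 + A 1 0 * B 1 0 + A 0 1 * B 1 0 + A 1 0 * B 0 1) / 2 := by
  rw [trace_E1_mul]
  rfl

theorem trace_E1_mul_kron2_bloch (n m : EuclideanSpace ℝ (Fin 3)) :
    (E1 * kron2 (bloch n) (bloch m)).trace = (((1 + (n 0 * m 0 - n 2 * m 2)) / 2 : ℝ) : ℂ) := by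
  rw [trace_E1_mul_kron2, bloch_eq_of, bloch_eq_of]
  simp only [of_apply, cons_val', cons_val_zero, cons_val_one, empty_val', cons_val_fin_one]
  push_cast
  ring

theorem trace_E2_mul_kron2_bloch (n m : EuclideanSpace ℝ (Fin 3)) :
    (E2 * kron2 (bloch n) (bloch m)).trace = (((1 - (n 0 * m 0 - n 2 * m 2)) / 2 : ℝ) : ℂ) := by
  rw [E2, sub_mul, one_mul, trace_sub, trace_kron2, trace_bloch, trace_bloch,
    trace_E1_mul_kron2_bloch]
  push_cast
  ring

theorem EuclideanSpace.sq_add_sq_le_norm_sq {ι : Type*} [Fintype ι] (x : EuclideanSpace ℝ ι)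
    {i j : ι} (hij : i ≠ j) : x i ^ 2 + x j ^ 2 ≤ ‖x‖ ^ 2 := by
  classical
  rw [EuclideanSpace.real_norm_sq_eq, ← Finset.sum_pair (f := fun k => x k ^ 2) hij]
  exact Finset.sum_le_sum_of_subset_of_nonneg (Finset.subset_univ _) fun k _ _ => sq_nonneg (x k)

theorem abs_mul_sub_mul_le_one {a b c d : ℝ} (hab : a ^ 2 + b ^ 2 ≤ 1) (hcd : c ^ 2 + d ^ 2 ≤ 1) :
    |a * c - b * d| ≤ 1 := by
  rw [← sq_le_one_iff_abs_le_one]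
  calc (a * c - b * d) ^ 2
      ≤ (a * c - b * d) ^ 2 + (a * d + b * c) ^ 2 := le_add_of_nonneg_right (sq_nonneg _)
    _ = (a ^ 2 + b ^ 2) * (c ^ 2 + d ^ 2) := sq_add_sq_mul_sq_add_sq.symm
    _ ≤ 1 := mul_le_one₀ hab (by positivity) hcd

/-- `{E1, E2}` is a valid two-outcome SEP measurement: the effects sum to the
identity and each yields nonnegative probability on every product state. -/
theorem E1_E2_valid_SEP_measurement :
    E1 + E2 = 1 ∧
    (∀ n m : EuclideanSpace ℝ (Fin 3), ‖n‖ ≤ 1 → ‖m‖ ≤ 1 →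
      0 ≤ (E1 * kron2 (bloch n) (bloch m)).trace ∧
      0 ≤ (E2 * kron2 (bloch n) (bloch m)).trace) := by
  refine ⟨add_sub_cancel E1 1, fun n m hn hm => ?_⟩
  have unit_sq {v : EuclideanSpace ℝ (Fin 3)} (hv : ‖v‖ ≤ 1) : v 0 ^ 2 + v 2 ^ 2 ≤ 1 :=
    (v.sq_add_sq_le_norm_sq (by decide)).trans (pow_le_one₀ (norm_nonneg v) hv)
  obtain ⟨hlo, hhi⟩ := abs_le.mp (abs_mul_sub_mul_le_one (unit_sq hn) (unit_sq hm))
  rw [trace_E1_mul_kron2_bloch, trace_E2_mul_kron2_bloch, Complex.zero_le_real,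
    Complex.zero_le_real]
  constructor <;> linarith

end
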